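/- Let m > 0, k_m > 0 and k_λ > 0 with k_λ ≥ 1/(4m²). Set p* = 1/(2m·√k_λ). Then 0 < p* ≤ 1 and p* minimizes the total cost C(p) = (2p+1)/(4pm) + (k_m + p·k_λ)·m over p ∈ (0,1]: C(p*) ≤ C(p) for all p ∈ (0,1]. -/

import Mathlib

/-!
Up to the constant `1/(2m) + k_m m`, the cost is `a/p + b p` with `a = 1/(4m)` and `b = k_λ m`.
By AM-GM this is at least `2√(ab) = √k_λ`, with equality where `b p² = a`, that is at
`p* = 1/(2m√k_λ)`; the threshold on `k_λ` is exactly the condition `p* ≤ 1`.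
-/

open Real

/-- The cost `C(p, m)`, with `km = k_m` and `kl = k_λ`. -/
noncomputable def totalCost (m km kl p : ℝ) : ℝ :=
  (2 * p + 1) / (4 * p * m) + (km + p * kl) * m

theorem two_sqrt_mul_le_div_add_mul {a b x : ℝ} (ha : 0 ≤ a) (hb : 0 ≤ b) (hx : 0 < x) :
    2 * √(a * b) ≤ a / x + b * x := by
  have hab : a * b = a / x * (b * x) := by field_simp
  rw [hab, sqrt_mul (by positivity), ← mul_assoc]
  calc 2 * √(a / x) * √(b * x) ≤ √(a / x) ^ 2 + √(b * x) ^ 2 := two_mul_le_add_sq _ _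
    _ = a / x + b * x := by rw [sq_sqrt (by positivity), sq_sqrt (by positivity)]

theorem div_add_mul_eq_two_sqrt_mul {a b x : ℝ} (hb : 0 ≤ b) (hx : 0 < x) (hbx : b * x ^ 2 = a) :
    a / x + b * x = 2 * √(a * b) := by
  have hab : a * b = (b * x) ^ 2 := by rw [← hbx]; ring
  rw [hab, sqrt_sq (by positivity), ← hbx]
  field_simp
  ring

theorem totalCost_eq (m km kl : ℝ) {p : ℝ} (hm : m ≠ 0) (hp : p ≠ 0) :
    totalCost m km kl p = 1 / (2 * m) + km * m + ((1 / (4 * m)) / p + kl * m * p) := by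
  unfold totalCost
  field_simp
  ring

theorem sqrt_eq_two_sqrt_one_div_four_mul_mul {m kl : ℝ} (hm : 0 < m) :
    √kl = 2 * √(1 / (4 * m) * (kl * m)) := by
  have h : 1 / (4 * m) * (kl * m) = kl / 2 ^ 2 := by field_simp; ring
  rw [h, sqrt_div' _ (by norm_num), sqrt_sq (by norm_num)]
  ring

theorem one_le_two_mul_mul_sqrt {m kl : ℝ} (hm : 0 < m) (hthr : 1 / (4 * m ^ 2) ≤ kl) :
    1 ≤ 2 * m * √kl := by
  have h : 1 / (2 * m) ≤ √kl := by
    rw [le_sqrt (by positivity) (le_trans (by positivity) hthr)]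
    calc (1 / (2 * m)) ^ 2 = 1 / (4 * m ^ 2) := by ring
      _ ≤ kl := hthr
  rwa [div_le_iff₀ (by positivity), mul_comm] at h

theorem add_sqrt_le_totalCost {m km kl : ℝ} (hm : 0 < m) (hkl : 0 ≤ kl) {p : ℝ} (hp : 0 < p) :
    1 / (2 * m) + km * m + √kl ≤ totalCost m km kl p := by
  rw [totalCost_eq m km kl hm.ne' hp.ne', sqrt_eq_two_sqrt_one_div_four_mul_mul hm]
  gcongr
  exact two_sqrt_mul_le_div_add_mul (by positivity) (by positivity) hp

theorem totalCost_one_div_two_mul_mul_sqrt {m km kl : ℝ} (hm : 0 < m) (hkl : 0 < kl) :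
    totalCost m km kl (1 / (2 * m * √kl)) = 1 / (2 * m) + km * m + √kl := by
  have hs : 0 < √kl := sqrt_pos.mpr hkl
  have hp : 0 < 1 / (2 * m * √kl) := by positivity
  have hbp : kl * m * (1 / (2 * m * √kl)) ^ 2 = 1 / (4 * m) := by
    field_simp
    rw [sq_sqrt hkl.le]
    ring
  rw [totalCost_eq m km kl hm.ne' hp.ne', div_add_mul_eq_two_sqrt_mul (by positivity) hp hbp,
    ← sqrt_eq_two_sqrt_one_div_four_mul_mul hm]

theorem interior_optimum_above_threshold_general
    (m km kl : ℝ) (hm : 0 < m)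
    (hthr : 1 / (4 * m ^ 2) ≤ kl) :
    0 < 1 / (2 * m * Real.sqrt kl) ∧ 1 / (2 * m * Real.sqrt kl) ≤ 1 ∧
    ∀ p : ℝ, 0 < p → p ≤ 1 →
      (2 * (1 / (2 * m * Real.sqrt kl)) + 1) /
          (4 * (1 / (2 * m * Real.sqrt kl)) * m) +
        (km + (1 / (2 * m * Real.sqrt kl)) * kl) * m ≤
      (2 * p + 1) / (4 * p * m) + (km + p * kl) * m := by
  have hkl : 0 < kl := lt_of_lt_of_le (by positivity) hthr
  have hs : 0 < √kl := sqrt_pos.mpr hkl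
  refine ⟨by positivity, (div_le_one (by positivity)).mpr (one_le_two_mul_mul_sqrt hm hthr), ?_⟩
  intro p hp _
  change totalCost m km kl (1 / (2 * m * √kl)) ≤ totalCost m km kl p
  rw [totalCost_one_div_two_mul_mul_sqrt hm hkl]
  exact add_sqrt_le_totalCost hm hkl.le hp

/-- When the transmission cost is above the threshold, `k_λ ≥ 1/(4m²)`,
the point `p* = 1/(2 m √k_λ)` lies in `(0,1]` and minimizes the total cost
`C(p) = (2p+1)/(4pm) + (k_m + p k_λ) m` over `p ∈ (0,1]`. -/
theorem interior_optimum_above_threshold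
    (m km kl : ℝ) (hm : 0 < m) (hkm : 0 < km) (hkl : 0 < kl)
    (hthr : 1 / (4 * m ^ 2) ≤ kl) :
    0 < 1 / (2 * m * Real.sqrt kl) ∧ 1 / (2 * m * Real.sqrt kl) ≤ 1 ∧
    ∀ p : ℝ, 0 < p → p ≤ 1 →
      (2 * (1 / (2 * m * Real.sqrt kl)) + 1) /
          (4 * (1 / (2 * m * Real.sqrt kl)) * m) +
        (km + (1 / (2 * m * Real.sqrt kl)) * kl) * m ≤
      (2 * p + 1) / (4 * p * m) + (km + p * kl) * m :=
  interior_optimum_above_threshold_general m km kl hm hthr
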